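/- arXiv:0811.3373 — 6 statements merged into one kernel-verified Lean document; each statement's English description precedes it below -/
import Mathlib

section
/- Let L be a finite lattice and m : L → [0,1] with m(⊥) = 0 and Σ_{x∈L} m(x) = 1. Define bel(x) := Σ_{y ≤ x} m(y). Then for every k ≥ 2 and every family x₁, …, x_k ∈ L, bel(⋁_{i∈K} x_i) ≥ Σ_{∅≠I⊆K} (−1)^{|I|+1} bel(⋀_{i∈I} x_i), i.e., bel is totally monotone. -/
open Finset

theorem belief_totally_monotone {L : Type*} [Lattice L] [Fintype L] [BoundedOrder L]
    [DecidableEq L] [DecidableRel ((· ≤ ·) : L → L → Prop)]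
    (m : L → ℝ) (hnn : ∀ x, 0 ≤ m x) (hle : ∀ x, m x ≤ 1)
    (hbot : m ⊥ = 0) (hsum : ∑ x : L, m x = 1) :
    ∀ k : ℕ, 2 ≤ k → ∀ x : Fin k → L,
      (∑ y ∈ univ.filter (· ≤ univ.sup x), m y) ≥
        ∑ I ∈ univ.powerset.filter (Finset.Nonempty) ,
          (-1 : ℝ) ^ (I.card + 1) *
            ∑ y ∈ univ.filter (fun y => y ≤ I.inf x), m y := by
  intro k hk x
  classical
  set S : L → Finset (Fin k) := fun y => univ.filter (fun i => y ≤ x i) with hS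
  have key : ∑ I ∈ univ.powerset.filter (Finset.Nonempty),
      (-1 : ℝ) ^ (I.card + 1) * ∑ y ∈ univ.filter (fun y => y ≤ I.inf x), m y
      = ∑ y ∈ univ.filter (fun y => (S y).Nonempty), m y := by
    calc ∑ I ∈ univ.powerset.filter (Finset.Nonempty),
        (-1 : ℝ) ^ (I.card + 1) * ∑ y ∈ univ.filter (fun y => y ≤ I.inf x), m y
        = ∑ I ∈ univ.powerset.filter (Finset.Nonempty),
            ∑ y : L, (if y ≤ I.inf x then (-1 : ℝ) ^ (I.card + 1) * m y else 0) := by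
          refine Finset.sum_congr rfl fun I _ => ?_
          rw [Finset.mul_sum, Finset.sum_filter]
      _ = ∑ y : L, ∑ I ∈ univ.powerset.filter (Finset.Nonempty),
            (if y ≤ I.inf x then (-1 : ℝ) ^ (I.card + 1) * m y else 0) :=
          Finset.sum_comm
      _ = ∑ y : L, (∑ I ∈ (S y).powerset.filter (Finset.Nonempty),
            (-1 : ℝ) ^ (I.card + 1)) * m y := by
          refine Finset.sum_congr rfl fun y _ => ?_
          rw [Finset.sum_mul, ← Finset.sum_filter]
          refine Finset.sum_congr ?_ fun I _ => rfl
          ext I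
          simp only [Finset.mem_filter, Finset.mem_powerset, Finset.subset_univ,
            true_and, Finset.le_inf_iff, hS, Finset.subset_iff, Finset.mem_filter,
            Finset.mem_univ, true_and]
          tauto
      _ = ∑ y : L, (if (S y).Nonempty then (1:ℝ) else 0) * m y := by
          refine Finset.sum_congr rfl fun y _ => ?_
          congr 1
          have h1 : ∑ I ∈ (S y).powerset, (-1 : ℝ) ^ I.card
              = if S y = ∅ then 1 else 0 := by
            have h := Finset.sum_powerset_neg_one_pow_card (x := S y)
            have h' := congrArg (fun z : ℤ => (z : ℝ)) h
            push_cast at h'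
            simpa using h'
          have h2 : (S y).powerset = insert (∅ : Finset (Fin k))
              ((S y).powerset.filter (Finset.Nonempty)) := by
            ext I
            by_cases hI : I = ∅
            · simp [hI, Finset.nonempty_iff_ne_empty]
            · simp [hI, Finset.nonempty_iff_ne_empty]
          rw [h2, Finset.sum_insert (by simp [Finset.nonempty_iff_ne_empty])] at h1
          simp only [Finset.card_empty, pow_zero] at h1
          have h3 : ∑ I ∈ (S y).powerset.filter (Finset.Nonempty), (-1 : ℝ) ^ (I.card + 1)
              = - ∑ I ∈ (S y).powerset.filter (Finset.Nonempty), (-1 : ℝ) ^ I.card := by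
            rw [← Finset.sum_neg_distrib]
            exact Finset.sum_congr rfl fun I _ => by ring
          rw [h3]
          rcases eq_or_ne (S y) ∅ with h | h
          · simp [h, Finset.nonempty_iff_ne_empty, Finset.filter_singleton,
              Finset.not_nonempty_empty]
          · simp only [h, if_false] at h1
            have : ∑ I ∈ (S y).powerset.filter (Finset.Nonempty), (-1 : ℝ) ^ I.card = -1 := by
              linarith
            rw [this]
            simp [Finset.nonempty_iff_ne_empty, h]
      _ = ∑ y ∈ univ.filter (fun y => (S y).Nonempty), m y := by
          rw [Finset.sum_filter]
          refine Finset.sum_congr rfl fun y _ => ?_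
          split <;> simp
  rw [key]
  refine Finset.sum_le_sum_of_subset_of_nonneg ?_ (fun y _ _ => hnn y)
  intro y hy
  simp only [Finset.mem_filter, Finset.mem_univ, true_and] at hy ⊢
  obtain ⟨i, hi⟩ := hy
  simp only [hS, Finset.mem_filter, Finset.mem_univ, true_and] at hi
  exact hi.trans (Finset.le_sup (Finset.mem_univ i))
end

section
/- Let L be a finite lattice and m₁, m₂ : L → ℝ. Define the Dempster combination m(x) := Σ_{y₁ ∧ y₂ = x} m₁(y₁) m₂(y₂), and co-Möbius transforms q_i(x) := Σ_{y ≥ x} m_i(y), q(x) := Σ_{y ≥ x} m(y). Then q(x) = q₁(x) · q₂(x) for all x ∈ L. -/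
open Finset

theorem dempster_commonality {L : Type*} [Lattice L] [Fintype L] [BoundedOrder L]
    [DecidableEq L] [DecidableRel ((· ≤ ·) : L → L → Prop)]
    (m₁ m₂ : L → ℝ) :
    ∀ x : L,
      (∑ y ∈ univ.filter (fun y => x ≤ y),
          ∑ p ∈ (univ ×ˢ univ : Finset (L × L)).filter (fun p => p.1 ⊓ p.2 = y),
            m₁ p.1 * m₂ p.2) =
      (∑ y ∈ univ.filter (fun y => x ≤ y), m₁ y) *
      (∑ y ∈ univ.filter (fun y => x ≤ y), m₂ y) := by
  intro x
  rw [Finset.sum_fiberwise_eq_sum_filter, Finset.sum_mul_sum,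
    ← Finset.sum_product', ← Finset.filter_product]
  apply Finset.sum_congr _ (fun _ _ => rfl)
  apply Finset.filter_congr
  intro p _
  simp [le_inf_iff]
end

section
/- Every capacity on a finite lattice L is a belief function (has nonnegative Möbius transform) if and only if L is a chain (totally ordered). -/
open Finset

theorem capacity_belief_iff_chain {L : Type*} [Lattice L] [Fintype L] [BoundedOrder L]
    [DecidableRel ((· ≤ ·) : L → L → Prop)] :
    (∀ v : L → ℝ, (∀ x, v x ∈ Set.Icc (0 : ℝ) 1) → v ⊥ = 0 → v ⊤ = 1 → Monotone v →
      ∀ m : L → ℝ, (∀ x, v x = ∑ y ∈ univ.filter (· ≤ x), m y) → ∀ x, 0 ≤ m x) ↔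
    (∀ x y : L, x ≤ y ∨ y ≤ x) := by
  classical
  constructor
  · intro h a b
    by_contra hab
    push_neg at hab
    obtain ⟨h1, h2⟩ := hab
    -- a and b are incomparable
    set m : L → ℝ := fun y =>
      (if y = a then 1 else 0) + (if y = b then 1 else 0) + (if y = a ⊔ b then -1 else 0)
      with hm
    set v : L → ℝ := fun x => if a ≤ x ∨ b ≤ x then 1 else 0 with hv
    have hsum : ∀ x, v x = ∑ y ∈ univ.filter (· ≤ x), m y := by
      intro x
      have hmemA : ∀ c : L, c ∈ univ.filter (· ≤ x) ↔ c ≤ x := by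
        intro c; simp
      rw [hm]
      simp only [Finset.sum_add_distrib, Finset.sum_ite_eq', hmemA]
      by_cases ha : a ≤ x <;> by_cases hb : b ≤ x <;>
        simp [hv, ha, hb, sup_le_iff]
    have hIcc : ∀ x, v x ∈ Set.Icc (0 : ℝ) 1 := by
      intro x; rw [hv]; dsimp only
      split_ifs <;> norm_num
    have hbot : v ⊥ = 0 := by
      rw [hv]; dsimp only
      rw [if_neg]
      rintro (hc | hc)
      · exact h1 ((le_bot_iff.mp hc) ▸ bot_le)
      · exact h2 ((le_bot_iff.mp hc) ▸ bot_le)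
    have htop : v ⊤ = 1 := by
      rw [hv]; simp
    have hmono : Monotone v := by
      intro x y hxy
      rw [hv]; dsimp only
      split_ifs with hx hy hy
      · exact le_refl _
      · rcases hx with hc | hc
        · exact absurd (hc.trans hxy) (fun hh => hy (Or.inl hh))
        · exact absurd (hc.trans hxy) (fun hh => hy (Or.inr hh))
      · norm_num
      · exact le_refl _
    have := h v hIcc hbot htop hmono m hsum (a ⊔ b)
    have hne1 : a ⊔ b ≠ a := fun hc => h2 (hc ▸ le_sup_right)
    have hne2 : a ⊔ b ≠ b := fun hc => h1 (hc ▸ le_sup_left)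
    have hval : m (a ⊔ b) = -1 := by
      rw [hm]; dsimp only
      rw [if_neg hne1, if_neg hne2, if_pos rfl]; ring
    rw [hval] at this
    norm_num at this
  · intro hchain v hIcc hbot htop hmono m hm x
    letI : IsTotal L (· ≤ ·) := ⟨hchain⟩
    letI : LinearOrder L := Lattice.toLinearOrder L
    by_cases hx : x = ⊥
    · subst hx
      have hf : univ.filter (· ≤ (⊥ : L)) = {⊥} := by
        ext y; simp [le_bot_iff]
      have := hm ⊥
      rw [hf, Finset.sum_singleton] at this
      rw [hbot] at this
      linarith
    · have hS : (⊥ : L) ∈ univ.filter (fun y => y ≤ x ∧ y ≠ x) := by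
        simp only [Finset.mem_filter, Finset.mem_univ, true_and]
        exact ⟨bot_le, fun h => hx h.symm⟩
      set S := univ.filter (fun y => y ≤ x ∧ y ≠ x) with hSdef
      have hSne : S.Nonempty := ⟨⊥, hS⟩
      set p := S.max' hSne with hp
      have hpmem : p ∈ S := S.max'_mem hSne
      rw [hSdef] at hpmem
      simp only [Finset.mem_filter, Finset.mem_univ, true_and] at hpmem
      obtain ⟨hpx, hpne⟩ := hpmem
      have hkey : univ.filter (· ≤ x) = insert x (univ.filter (· ≤ p)) := by
        ext y
        simp only [Finset.mem_filter, Finset.mem_univ, true_and, Finset.mem_insert]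
        constructor
        · intro hy
          by_cases hyx : y = x
          · exact Or.inl hyx
          · exact Or.inr (S.le_max' y (by simp [hSdef, hy, hyx]))
        · rintro (rfl | hy)
          · exact le_refl _
          · exact hy.trans hpx
      have hxnot : x ∉ univ.filter (· ≤ p) := by
        simp only [Finset.mem_filter, Finset.mem_univ, true_and]
        intro hc
        exact hpne (le_antisymm hpx hc)
      have h1 := hm x
      rw [hkey, Finset.sum_insert hxnot, ← hm p] at h1
      have := hmono hpx
      linarith
end

section
/- Let L be a finite lattice, bel a belief function on L with Möbius transform m satisfying m(⊤) ≠ 0, and q its co-Möbius transform q(x) = Σ_{y≥x} m(y). For y ∈ L define w_y := Π_{x ≥ y} q(x)^{−μ(x,y)} where μ is the Möbius function of the dual order. Then the co-Möbius transform of bel factors as q(x) = Π_{y ∈ L, y ≱ x} w_y for all x ∈ L, i.e., bel is the Dempster combination of the simple support functions y^{w_y}. -/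
open Finset

theorem belief_decomposition_simple_support
    {L : Type*} [Lattice L] [Fintype L] [BoundedOrder L]
    [DecidableEq L] [DecidableRel ((· ≤ ·) : L → L → Prop)]
    (m : L → ℝ) (hnn : ∀ x, 0 ≤ m x) (hbot : m ⊥ = 0) (hsum : ∑ x : L, m x = 1)
    (htop : 0 < m ⊤)
    (q : L → ℝ) (hq : ∀ x, q x = ∑ y ∈ univ.filter (fun y => x ≤ y), m y)
    -- μ is the Möbius function of the dual order: for y ≤ x,
    -- ∑_{t : y ≤ t ≤ x} μ x t = δ_{x,y}, and μ x y = 0 unless y ≤ x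
    (μ : L → L → ℝ)
    (hμ : ∀ x y : L, y ≤ x →
      (∑ t ∈ univ.filter (fun t => y ≤ t ∧ t ≤ x), μ x t) = if x = y then 1 else 0)
    (hμ0 : ∀ x y : L, ¬ y ≤ x → μ x y = 0)
    (w : L → ℝ)
    (hw : ∀ y, w y = ∏ x ∈ univ.filter (fun x => y ≤ x), q x ^ (-(μ x y))) :
    ∀ x : L, q x = ∏ y ∈ univ.filter (fun y => ¬ x ≤ y), w y := by
  -- positivity of q
  have hqpos : ∀ x, 0 < q x := by
    intro x
    rw [hq]
    have h1 : ⊤ ∈ univ.filter (fun y => x ≤ y) := by simp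
    calc (0:ℝ) < m ⊤ := htop
      _ ≤ _ := Finset.single_le_sum (fun i _ => hnn i) h1
  have hqbot : q ⊥ = 1 := by
    rw [hq, Finset.filter_true_of_mem (fun y _ => bot_le), hsum]
  set f : L → ℝ := fun z => Real.log (q z) with hf
  set g : L → ℝ := fun y => ∑ x' ∈ univ.filter (fun x' => y ≤ x'), μ x' y * f x' with hg
  -- swap sums lemma
  have hswap : ∀ (P : L → Prop) [DecidablePred P],
      ∑ y ∈ univ.filter P, g y
        = ∑ x' : L, f x' * ∑ y ∈ univ.filter P, μ x' y := by
    intro P _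
    have h1 : ∀ y, g y = ∑ x' : L, μ x' y * f x' := by
      intro y
      rw [hg]
      refine Finset.sum_subset (Finset.filter_subset _ _) ?_
      intro x' _ hx'
      simp only [Finset.mem_filter, Finset.mem_univ, true_and] at hx'
      rw [hμ0 x' y hx', zero_mul]
    simp only [h1]
    rw [Finset.sum_comm]
    refine Finset.sum_congr rfl fun x' _ => ?_
    rw [Finset.mul_sum]
    exact Finset.sum_congr rfl fun y _ => mul_comm _ _
  intro x
  -- inner sum over {y : x ≤ y}
  have hA : ∑ y ∈ univ.filter (fun y => x ≤ y), g y = f x := by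
    rw [hswap]
    have h2 : ∀ x' : L, (∑ y ∈ univ.filter (fun y => x ≤ y), μ x' y)
        = if x' = x then 1 else 0 := by
      intro x'
      by_cases hxx : x ≤ x'
      · rw [← hμ x' x hxx]
        refine (Finset.sum_subset ?_ ?_).symm
        · intro y hy
          simp only [Finset.mem_filter, Finset.mem_univ, true_and] at hy ⊢
          exact hy.1
        · intro y _ hy
          simp only [Finset.mem_filter, Finset.mem_univ, true_and, not_and] at hy ⊢
          rcases Finset.mem_filter.mp ‹y ∈ univ.filter (fun y => x ≤ y)› with ⟨_, hxy⟩
          exact hμ0 x' y (hy hxy)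
      · rw [if_neg (by rintro rfl; exact hxx le_rfl)]
        refine Finset.sum_eq_zero fun y hy => ?_
        simp only [Finset.mem_filter, Finset.mem_univ, true_and] at hy
        refine hμ0 x' y fun h => hxx (hy.trans h)
    simp only [h2]
    simp [Finset.sum_ite_eq', Finset.mem_univ]
  have hB : ∑ y ∈ univ.filter (fun _ : L => True), g y = 0 := by
    rw [hswap]
    have h2 : ∀ x' : L, (∑ y ∈ univ.filter (fun _ : L => True), μ x' y)
        = if x' = ⊥ then 1 else 0 := by
      intro x'
      rw [← hμ x' ⊥ bot_le]
      refine (Finset.sum_subset ?_ ?_).symm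
      · intro y _; simp
      · intro y _ hy
        simp only [Finset.mem_filter, Finset.mem_univ, true_and, bot_le] at hy
        exact hμ0 x' y hy
    simp only [h2]
    have : ∑ x' : L, f x' * (if x' = ⊥ then (1:ℝ) else 0) = f ⊥ := by
      simp [Finset.sum_ite_eq', Finset.mem_univ]
    rw [this, hf]
    simp [hqbot]
  -- the complementary sum
  have hC : ∑ y ∈ univ.filter (fun y => ¬ x ≤ y), g y = - f x := by
    have := Finset.sum_filter_add_sum_filter_not univ (fun y => x ≤ y) g
    have hB' : ∑ y : L, g y = 0 := by
      simpa using hB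
    rw [hA] at this
    linarith [this, hB']
  -- now compute the product
  have hwexp : ∀ y, w y = Real.exp (- g y) := by
    intro y
    rw [hw]
    have h1 : ∀ x' ∈ univ.filter (fun x' => y ≤ x'),
        q x' ^ (-(μ x' y)) = Real.exp (-(μ x' y * f x')) := by
      intro x' _
      rw [Real.rpow_def_of_pos (hqpos x'), hf]
      ring_nf
    rw [Finset.prod_congr rfl h1, ← Real.exp_sum, hg, ← Finset.sum_neg_distrib]
  calc q x = Real.exp (f x) := by rw [hf, Real.exp_log (hqpos x)]
    _ = Real.exp (∑ y ∈ univ.filter (fun y => ¬ x ≤ y), - g y) := by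
        rw [Finset.sum_neg_distrib, hC, neg_neg]
    _ = ∏ y ∈ univ.filter (fun y => ¬ x ≤ y), w y := by
        rw [Real.exp_sum]
        exact Finset.prod_congr rfl fun y _ => (hwexp y).symm
end

section
/- Let L be a finite lattice and bel a belief function on L whose Möbius transform m has focal elements {x : m(x) > 0} forming a chain in L. Then bel(x ∧ y) = min(bel(x), bel(y)) for all x, y ∈ L. -/
open Finset

theorem chain_focal_necessity {L : Type*} [Lattice L] [Fintype L] [BoundedOrder L]
    [DecidableRel ((· ≤ ·) : L → L → Prop)]
    (m : L → ℝ) (hnn : ∀ x, 0 ≤ m x) (hbot : m ⊥ = 0) (hsum : ∑ x : L, m x = 1)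
    (hchain : IsChain (· ≤ ·) {x : L | 0 < m x}) :
    ∀ x y : L,
      (∑ z ∈ univ.filter (· ≤ x ⊓ y), m z) =
        min (∑ z ∈ univ.filter (· ≤ x), m z) (∑ z ∈ univ.filter (· ≤ y), m z) := by
  classical
  -- restrict to focal elements
  have key : ∀ a : L, (∑ z ∈ univ.filter (· ≤ a), m z)
      = ∑ z ∈ univ.filter (fun z => z ≤ a ∧ 0 < m z), m z := by
    intro a
    refine (Finset.sum_subset ?_ ?_).symm
    · intro z hz
      simp only [mem_filter, mem_univ, true_and] at hz ⊢
      exact hz.1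
    · intro z hz hz'
      simp only [mem_filter, mem_univ, true_and] at hz hz'
      have : ¬ 0 < m z := fun h => hz' ⟨hz, h⟩
      linarith [hnn z]
  intro x y
  rw [key, key, key]
  by_cases hex : ∃ z, 0 < m z ∧ z ≤ x ∧ ¬ z ≤ y
  · obtain ⟨z₀, hz₀, hzx, hzy⟩ := hex
    -- every focal w ≤ y satisfies w ≤ z₀ ≤ x
    have hwx : ∀ w, 0 < m w → w ≤ y → w ≤ x := by
      intro w hw hwy
      rcases hchain.total (show w ∈ {x : L | 0 < m x} from hw)
        (show z₀ ∈ {x : L | 0 < m x} from hz₀) with h | h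
      · exact h.trans hzx
      · exact absurd (h.trans hwy) hzy
    have hset : univ.filter (fun z => z ≤ x ⊓ y ∧ 0 < m z)
        = univ.filter (fun z => z ≤ y ∧ 0 < m z) := by
      ext w
      simp only [mem_filter, mem_univ, true_and, le_inf_iff]
      constructor
      · rintro ⟨⟨_, h2⟩, h3⟩; exact ⟨h2, h3⟩
      · rintro ⟨h1, h2⟩; exact ⟨⟨hwx w h2 h1, h1⟩, h2⟩
    rw [hset]
    have hle : (∑ z ∈ univ.filter (fun z => z ≤ y ∧ 0 < m z), m z)
        ≤ ∑ z ∈ univ.filter (fun z => z ≤ x ∧ 0 < m z), m z := by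
      apply Finset.sum_le_sum_of_subset_of_nonneg
      · intro w hw
        simp only [mem_filter, mem_univ, true_and] at hw ⊢
        exact ⟨hwx w hw.2 hw.1, hw.2⟩
      · intro w _ _; exact hnn w
    exact (min_eq_right hle).symm
  · push_neg at hex
    have hwy : ∀ w, 0 < m w → w ≤ x → w ≤ y := fun w hw h => hex w hw h
    have hset : univ.filter (fun z => z ≤ x ⊓ y ∧ 0 < m z)
        = univ.filter (fun z => z ≤ x ∧ 0 < m z) := by
      ext w
      simp only [mem_filter, mem_univ, true_and, le_inf_iff]
      constructor
      · rintro ⟨⟨h1, _⟩, h3⟩; exact ⟨h1, h3⟩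
      · rintro ⟨h1, h2⟩; exact ⟨⟨h1, hwy w h2 h1⟩, h2⟩
    rw [hset]
    have hle : (∑ z ∈ univ.filter (fun z => z ≤ x ∧ 0 < m z), m z)
        ≤ ∑ z ∈ univ.filter (fun z => z ≤ y ∧ 0 < m z), m z := by
      apply Finset.sum_le_sum_of_subset_of_nonneg
      · intro w hw
        simp only [mem_filter, mem_univ, true_and] at hw ⊢
        exact ⟨hwy w hw.2 hw.1, hw.2⟩
      · intro w _ _; exact hnn w
    exact (min_eq_left hle).symm
end

section
/- Let L be a finite lattice and N : L → [0,1] a necessity function, i.e., N(⊥) = 0, N(⊤) = 1, and N(x ∧ y) = min(N(x), N(y)) for all x, y. Then N is a belief function whose Möbius transform m is nonnegative and whose focal elements form a chain in L. -/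
open Finset

namespace NecAux

variable {L : Type*} [Lattice L] [Fintype L] [BoundedOrder L]

/-- minimum element of the level set `{y : t ≤ N y}` -/
noncomputable def aEl (N : L → ℝ) (t : ℝ) : L := (univ.filter (fun y => t ≤ N y)).inf id

/-- previous value of `N` below `t` (or `0`) -/
noncomputable def predV (N : L → ℝ) (t : ℝ) : ℝ :=
  (insert (0:ℝ) ((univ.filter (fun y => N y < t)).image N)).max' (insert_nonempty _ _)

open Classical in
/-- the candidate Möbius transform -/
noncomputable def mP (N : L → ℝ) (x : L) : ℝ :=
  if aEl N (N x) = x ∧ x ≠ ⊥ then N x - predV N (N x) else 0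

variable {N : L → ℝ}

lemma monoN (hmin : ∀ x y : L, N (x ⊓ y) = min (N x) (N y)) {x y : L} (h : x ≤ y) :
    N x ≤ N y := by
  have := hmin x y
  rw [inf_eq_left.mpr h] at this
  rw [this]; exact min_le_right _ _

lemma aEl_le {t : ℝ} {x : L} (h : t ≤ N x) : aEl N t ≤ x := by
  have : x ∈ univ.filter (fun y => t ≤ N y) := by simpa using h
  exact Finset.inf_le (f := id) this

lemma aEl_mono {t s : ℝ} (h : t ≤ s) : aEl N t ≤ aEl N s := by
  apply Finset.inf_mono
  intro y hy
  simp only [mem_filter, mem_univ, true_and] at hy ⊢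
  exact h.trans hy

lemma le_N_aEl (htop : N ⊤ = 1) (hmin : ∀ x y : L, N (x ⊓ y) = min (N x) (N y))
    {t : ℝ} (ht : t ≤ 1) : t ≤ N (aEl N t) := by
  have hne : (univ.filter (fun y => t ≤ N y)).Nonempty := ⟨⊤, by simp [htop, ht]⟩
  have hmem : aEl N t ∈ {y : L | t ≤ N y} := by
    rw [aEl, ← Finset.inf'_eq_inf hne]
    refine Finset.inf'_mem {y : L | t ≤ N y} ?_ _ hne id ?_
    · intro a ha b hb
      simp only [Set.mem_setOf_eq] at ha hb ⊢
      rw [hmin]; exact le_min ha hb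
    · intro i hi
      simpa using (mem_filter.mp hi).2
  exact hmem

lemma N_aEl (hrange : ∀ x, N x ∈ Set.Icc (0:ℝ) 1) (htop : N ⊤ = 1)
    (hmin : ∀ x y : L, N (x ⊓ y) = min (N x) (N y)) (x : L) :
    N (aEl N (N x)) = N x :=
  le_antisymm (monoN hmin (aEl_le le_rfl)) (le_N_aEl htop hmin (hrange x).2)

lemma focal_props (hrange : ∀ x, N x ∈ Set.Icc (0:ℝ) 1) (hbot : N ⊥ = 0)
    {x : L} (hx : mP N x ≠ 0) :
    aEl N (N x) = x ∧ 0 < N x := by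
  by_cases hc : aEl N (N x) = x ∧ x ≠ ⊥
  · refine ⟨hc.1, ?_⟩
    rcases lt_or_eq_of_le (hrange x).1 with h | h
    · exact h
    · exfalso
      apply hc.2
      have : aEl N (N x) ≤ ⊥ := aEl_le (by rw [hbot, ← h])
      rw [hc.1] at this
      exact le_bot_iff.mp this
  · exact absurd (by rw [mP, if_neg hc]) hx

lemma predV_lt {t : ℝ} (ht : 0 < t) : predV N t < t := by
  rw [predV, Finset.max'_lt_iff]
  intro y hy
  rcases mem_insert.mp hy with h | h
  · exact h ▸ ht
  · obtain ⟨z, hz, rfl⟩ := mem_image.mp h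
    exact (mem_filter.mp hz).2

lemma le_predV {t : ℝ} {y : L} (h : N y < t) : N y ≤ predV N t :=
  Finset.le_max' _ _ (mem_insert_of_mem (mem_image.mpr ⟨y, by simpa using h, rfl⟩))

lemma predV_mem (hbot : N ⊥ = 0) (t : ℝ) : ∃ w : L, N w = predV N t := by
  have := Finset.max'_mem (insert (0:ℝ) ((univ.filter (fun y => N y < t)).image N))
    (insert_nonempty _ _)
  rcases mem_insert.mp this with h | h
  · exact ⟨⊥, by rw [hbot, predV, h]⟩
  · obtain ⟨z, _, hz⟩ := mem_image.mp h
    exact ⟨z, by rw [hz]; rfl⟩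

lemma sum_mP_of_zero [DecidableRel ((· ≤ ·) : L → L → Prop)]
    (hrange : ∀ x, N x ∈ Set.Icc (0:ℝ) 1) (hbot : N ⊥ = 0)
    (hmin : ∀ x y : L, N (x ⊓ y) = min (N x) (N y))
    {x : L} (hx : N x ≤ 0) :
    ∑ y ∈ univ.filter (· ≤ x), mP N y = N x := by
  have hx0 : N x = 0 := le_antisymm hx (hrange x).1
  rw [hx0]
  apply Finset.sum_eq_zero
  intro y hy
  by_contra hne
  have h1 : 0 < N y := (focal_props hrange hbot hne).2
  have h2 : N y ≤ N x := monoN hmin (mem_filter.mp hy).2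
  rw [hx0] at h2
  linarith

lemma key [DecidableRel ((· ≤ ·) : L → L → Prop)]
    (hrange : ∀ x, N x ∈ Set.Icc (0:ℝ) 1) (hbot : N ⊥ = 0) (htop : N ⊤ = 1)
    (hmin : ∀ x y : L, N (x ⊓ y) = min (N x) (N y)) :
    ∀ (n : ℕ) (x : L), (univ.filter (fun y => N y < N x)).card ≤ n →
      ∑ y ∈ univ.filter (· ≤ x), mP N y = N x := by
  intro n
  induction n with
  | zero =>
    intro x hcard
    apply sum_mP_of_zero hrange hbot hmin
    by_contra h
    push_neg at h
    have hb : ⊥ ∈ univ.filter (fun y => N y < N x) := by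
      simp [hbot, h]
    have := Finset.card_pos.mpr ⟨⊥, hb⟩
    omega
  | succ n ih =>
    intro x hcard
    by_cases h0 : N x ≤ 0
    · exact sum_mP_of_zero hrange hbot hmin h0
    push_neg at h0
    classical
    set a := aEl N (N x) with ha_def
    set t' := predV N (N x) with ht'_def
    obtain ⟨w, hw⟩ := predV_mem (N := N) hbot (N x)
    set b := aEl N t' with hb_def
    have hNa : N a = N x := N_aEl hrange htop hmin x
    have hax : a ≤ x := aEl_le le_rfl
    have ht'lt : t' < N x := predV_lt h0
    have hNb : N b = t' := by
      rw [hb_def, ht'_def, ← hw]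
      exact N_aEl hrange htop hmin w
    have hba : b ≤ a := aEl_mono ht'lt.le
    have ha_ne_bot : a ≠ ⊥ := by
      intro h
      rw [h, hbot] at hNa
      linarith
    have ha_focal : aEl N (N a) = a := by rw [hNa]
    have hmPa : mP N a = N x - t' := by
      rw [mP, if_pos ⟨ha_focal, ha_ne_bot⟩, hNa]
    have hmPa_ne : mP N a ≠ 0 := by rw [hmPa]; intro h; linarith [sub_eq_zero.mp h]
    -- characterization of focal elements below x
    have hchar : ∀ y : L, (mP N y ≠ 0 ∧ y ≤ x) ↔ (y = a ∨ (mP N y ≠ 0 ∧ y ≤ b)) := by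
      intro y
      constructor
      · rintro ⟨hy, hyx⟩
        obtain ⟨hfix, hpos⟩ := focal_props hrange hbot hy
        have hle : N y ≤ N x := monoN hmin hyx
        rcases eq_or_lt_of_le hle with heq | hlt
        · left; rw [← hfix, heq]
        · right
          refine ⟨hy, ?_⟩
          have : N y ≤ t' := le_predV hlt
          calc y = aEl N (N y) := hfix.symm
            _ ≤ aEl N t' := aEl_mono this
      · rintro (rfl | ⟨hy, hyb⟩)
        · exact ⟨hmPa_ne, hax⟩
        · exact ⟨hy, hyb.trans (hba.trans hax)⟩
    have hnab : ¬ a ≤ b := by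
      intro h
      have := monoN hmin h
      rw [hNa, hNb] at this
      linarith
    have hset : (univ.filter (· ≤ x)).filter (fun y => mP N y ≠ 0)
        = insert a ((univ.filter (· ≤ b)).filter (fun y => mP N y ≠ 0)) := by
      ext y
      simp only [mem_insert, mem_filter, mem_univ, true_and]
      constructor
      · rintro ⟨h1, h2⟩
        rcases (hchar y).mp ⟨h2, h1⟩ with h | ⟨h3, h4⟩
        · exact Or.inl h
        · exact Or.inr ⟨h4, h3⟩
      · rintro (rfl | ⟨h1, h2⟩)
        · exact ⟨hax, hmPa_ne⟩
        · exact ⟨((hchar y).mpr (Or.inr ⟨h2, h1⟩)).2, h2⟩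
    have hanotin : a ∉ (univ.filter (· ≤ b)).filter (fun y => mP N y ≠ 0) := by
      simp only [mem_filter, mem_univ, true_and]
      rintro ⟨h, -⟩
      exact hnab h
    -- card decrease
    have hcard' : (univ.filter (fun y => N y < N b)).card ≤ n := by
      have hss : univ.filter (fun y => N y < N b) ⊂ univ.filter (fun y => N y < N x) := by
        constructor
        · intro y hy
          simp only [mem_filter, mem_univ, true_and] at hy ⊢
          rw [hNb] at hy
          exact hy.trans ht'lt
        · intro h
          have hwmem : w ∈ univ.filter (fun y => N y < N x) := by
            simp only [mem_filter, mem_univ, true_and]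
            rw [hw]; exact ht'lt
          have := h hwmem
          simp only [mem_filter, mem_univ, true_and] at this
          rw [hNb, hw] at this
          exact lt_irrefl _ this
      have := Finset.card_lt_card hss
      omega
    have hIH : ∑ y ∈ univ.filter (· ≤ b), mP N y = t' := by
      rw [ih b hcard', hNb]
    calc ∑ y ∈ univ.filter (· ≤ x), mP N y
        = ∑ y ∈ (univ.filter (· ≤ x)).filter (fun y => mP N y ≠ 0), mP N y :=
          (Finset.sum_filter_ne_zero _).symm
      _ = ∑ y ∈ insert a ((univ.filter (· ≤ b)).filter (fun y => mP N y ≠ 0)), mP N y := by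
          rw [hset]
      _ = mP N a + ∑ y ∈ (univ.filter (· ≤ b)).filter (fun y => mP N y ≠ 0), mP N y :=
          Finset.sum_insert hanotin
      _ = mP N a + ∑ y ∈ univ.filter (· ≤ b), mP N y := by
          rw [Finset.sum_filter_ne_zero]
      _ = N x := by rw [hmPa, hIH]; ring

lemma zero_of_sums [DecidableRel ((· ≤ ·) : L → L → Prop)] (f : L → ℝ)
    (h : ∀ x, ∑ y ∈ univ.filter (· ≤ x), f y = 0) : ∀ x, f x = 0 := by
  intro x
  induction x using WellFoundedLT.induction with
  | _ x ihx =>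
    classical
    have hs : univ.filter (· ≤ x) = insert x (univ.filter (· < x)) := by
      ext y
      simp only [mem_insert, mem_filter, mem_univ, true_and]
      constructor
      · intro hy
        rcases eq_or_lt_of_le hy with h1 | h1
        · exact Or.inl h1
        · exact Or.inr h1
      · rintro (rfl | h1)
        · exact le_rfl
        · exact h1.le
    have h2 := h x
    rw [hs, Finset.sum_insert (by simp)] at h2
    have h3 : ∑ y ∈ univ.filter (· < x), f y = 0 := by
      apply Finset.sum_eq_zero
      intro y hy
      exact ihx y (mem_filter.mp hy).2
    rw [h3] at h2
    linarith

end NecAux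

theorem necessity_is_belief {L : Type*} [Lattice L] [Fintype L] [BoundedOrder L]
    [DecidableRel ((· ≤ ·) : L → L → Prop)]
    (N : L → ℝ) (hrange : ∀ x, N x ∈ Set.Icc (0 : ℝ) 1)
    (hbot : N ⊥ = 0) (htop : N ⊤ = 1)
    (hmin : ∀ x y : L, N (x ⊓ y) = min (N x) (N y))
    (m : L → ℝ) (hmob : ∀ x, N x = ∑ y ∈ univ.filter (· ≤ x), m y) :
    (∀ x, 0 ≤ m x) ∧ IsChain (· ≤ ·) {x : L | m x ≠ 0} := by
  have hkey : ∀ x, ∑ y ∈ univ.filter (· ≤ x), NecAux.mP N y = N x :=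
    fun x => NecAux.key hrange hbot htop hmin _ x le_rfl
  have hm : ∀ x, m x = NecAux.mP N x := by
    have hz : ∀ x, ∑ y ∈ univ.filter (· ≤ x), (m y - NecAux.mP N y) = 0 := by
      intro x
      rw [Finset.sum_sub_distrib, ← hmob, hkey]
      ring
    intro x
    have := NecAux.zero_of_sums _ hz x
    linarith
  constructor
  · intro x
    rw [hm]
    by_cases h : NecAux.mP N x ≠ 0
    · obtain ⟨hfix, hpos⟩ := NecAux.focal_props hrange hbot h
      have hne : x ≠ ⊥ := by
        intro hb
        rw [hb, hbot] at hpos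
        exact lt_irrefl _ hpos
      rw [NecAux.mP, if_pos ⟨hfix, hne⟩]
      have := NecAux.predV_lt (N := N) hpos
      linarith
    · push_neg at h
      rw [h]
  · intro x hx y hy hne
    simp only [Set.mem_setOf_eq, hm] at hx hy
    obtain ⟨hfx, -⟩ := NecAux.focal_props hrange hbot hx
    obtain ⟨hfy, -⟩ := NecAux.focal_props hrange hbot hy
    rcases le_total (N x) (N y) with h | h
    · left
      calc x = NecAux.aEl N (N x) := hfx.symm
        _ ≤ NecAux.aEl N (N y) := NecAux.aEl_mono h
        _ = y := hfy
    · right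
      calc y = NecAux.aEl N (N y) := hfy.symm
        _ ≤ NecAux.aEl N (N x) := NecAux.aEl_mono h
        _ = x := hfx
end
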